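/- arXiv:1408.2208 — 5 statements merged into one kernel-verified Lean document; each statement's English description precedes it below -/
import Mathlib

section
/- (Reverse Eckart–Young, 2-norm part) Let A be an m×n real matrix with singular values σ_1 ≥ ... ≥ σ_n, and let B be a matrix of rank at most k satisfying ‖A − B‖_F ≤ sqrt(η² + Σ_{j=k+1}^n σ_j²) for some η ≥ 0. Then ‖A − B‖₂ ≤ sqrt(η² + σ_{k+1}²). -/
/-!
Fix a unit vector `u` and write `E = A - B`. Since `rank B ≤ k`, the kernel of `B` meets `uᗮ`
in a subspace of dimension at least `n - k - 1`; choose an orthonormal family `w` in it. On `w` the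
matrix `E` agrees with `A`, so by Ky Fan's minimum principle `∑ ‖E wᵢ‖² ≥ ∑_{j > k} σⱼ²`
(singular values indexed from `0`). Bessel's inequality for the rows of `E` and the orthonormal
family `(u, w)` then gives `‖E u‖² + ∑_{j > k} σⱼ² ≤ ‖E‖_F² ≤ η² + ∑_{j ≥ k} σⱼ²`, that is,
`‖E u‖² ≤ η² + σₖ²`.
-/

open Matrix

noncomputable def frobNorm {m n : ℕ} (A : Matrix (Fin m) (Fin n) ℝ) : ℝ :=
  Real.sqrt (∑ i, ∑ j, (A i j) ^ 2)

noncomputable def specNorm {m n : ℕ} (A : Matrix (Fin m) (Fin n) ℝ) : ℝ :=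
  ‖(Matrix.toEuclideanLin A).toContinuousLinearMap‖

/-- The `j`-th largest singular value of `A` (0-indexed). -/
noncomputable def sv {m n : ℕ} (A : Matrix (Fin m) (Fin n) ℝ) (j : Fin n) : ℝ :=
  Real.sqrt
    (((Matrix.isHermitian_conjTranspose_mul_self A).eigenvalues ∘
        Tuple.sort (Matrix.isHermitian_conjTranspose_mul_self A).eigenvalues)
      j.rev)

open Finset
open scoped RealInnerProductSpace

lemma sum_le_sum_mul_of_forall_le_of_forall_ge {ι : Type*} [Fintype ι]
    (μ t : ι → ℝ) (P : Finset ι) (c : ℝ) (hP : ∀ j ∈ P, μ j ≤ c) (hPc : ∀ j ∉ P, c ≤ μ j)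
    (ht₀ : ∀ j, 0 ≤ t j) (ht₁ : ∀ j, t j ≤ 1) (ht : ∑ j, t j = #P) :
    ∑ j ∈ P, μ j ≤ ∑ j, μ j * t j := by
  classical
  have hterm : ∀ j, 0 ≤ (μ j - c) * (t j - if j ∈ P then 1 else 0) := by
    intro j
    by_cases hj : j ∈ P
    · simpa [hj] using
        mul_nonneg_of_nonpos_of_nonpos (sub_nonpos.2 (hP j hj)) (sub_nonpos.2 (ht₁ j))
    · simpa [hj] using mul_nonneg (sub_nonneg.2 (hPc j hj)) (ht₀ j)
  have hsum := sum_nonneg fun j (_ : j ∈ univ) => hterm j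
  simp only [mul_sub, sub_mul, sum_sub_distrib, ← mul_sum, mul_ite, mul_one, mul_zero,
    sum_ite_mem, univ_inter, ht, sum_const, nsmul_eq_mul] at hsum
  linarith

theorem Orthonormal.fin_cons {𝕜 E : Type*} [RCLike 𝕜] [NormedAddCommGroup E]
    [InnerProductSpace 𝕜 E] {d : ℕ} {u : E} {w : Fin d → E} (hw : Orthonormal 𝕜 w)
    (hu : ‖u‖ = 1) (huw : ∀ i, inner 𝕜 u (w i) = 0) :
    Orthonormal 𝕜 (Fin.cons u w : Fin (d + 1) → E) := by
  refine ⟨fun i => ?_, fun i j hij => ?_⟩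
  · cases i using Fin.cases <;> simp [hu, hw.1]
  · cases i using Fin.cases <;> cases j using Fin.cases
    · exact absurd rfl hij
    · simp [huw]
    · simp [inner_eq_zero_symm, huw]
    · simpa using hw.2 (Fin.succ_injective _ |>.ne_iff.1 hij)

theorem exists_orthonormal_forall_mem {𝕜 E : Type*} [RCLike 𝕜] [NormedAddCommGroup E]
    [InnerProductSpace 𝕜 E] (W : Submodule 𝕜 E) [FiniteDimensional 𝕜 W] {d : ℕ}
    (hd : d ≤ Module.finrank 𝕜 W) : ∃ w : Fin d → E, Orthonormal 𝕜 w ∧ ∀ i, w i ∈ W :=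
  ⟨fun i => stdOrthonormalBasis 𝕜 W (Fin.castLE hd i),
    ((stdOrthonormalBasis 𝕜 W).orthonormal.comp _ (Fin.castLE_injective hd)).comp_linearIsometry
      W.subtypeₗᵢ,
    fun i => (stdOrthonormalBasis 𝕜 W (Fin.castLE hd i)).2⟩

theorem Submodule.finrank_le_finrank_inf_orthogonal_add {𝕜 E : Type*} [RCLike 𝕜]
    [NormedAddCommGroup E] [InnerProductSpace 𝕜 E] [FiniteDimensional 𝕜 E]
    (K L : Submodule 𝕜 E) :
    Module.finrank 𝕜 K ≤ Module.finrank 𝕜 (K ⊓ Lᗮ : Submodule 𝕜 E) + Module.finrank 𝕜 L := by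
  have h₁ := Submodule.finrank_sup_add_finrank_inf_eq K Lᗮ
  have h₂ := L.finrank_add_finrank_orthogonal
  have h₃ := (K ⊔ Lᗮ).finrank_le
  omega

namespace Matrix

variable {m n : Type*} [Fintype n] [DecidableEq n]

lemma IsHermitian.toEuclideanLin_eigenvectorBasis {H : Matrix n n ℝ} (hH : H.IsHermitian)
    (j : n) :
    toEuclideanLin H (hH.eigenvectorBasis j) = hH.eigenvalues j • hH.eigenvectorBasis j := by
  rw [toLpLin_apply, hH.mulVec_eigenvectorBasis]
  rfl

lemma IsHermitian.inner_toEuclideanLin_self {H : Matrix n n ℝ} (hH : H.IsHermitian)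
    (x : EuclideanSpace ℝ n) :
    ⟪x, toEuclideanLin H x⟫ = ∑ j, hH.eigenvalues j * ⟪hH.eigenvectorBasis j, x⟫ ^ 2 := by
  nth_rw 2 [← hH.eigenvectorBasis.sum_repr' x]
  simp only [map_sum, map_smul, hH.toEuclideanLin_eigenvectorBasis, inner_sum,
    real_inner_smul_right, smul_smul]
  refine sum_congr rfl fun j _ => ?_
  rw [real_inner_comm]
  ring

lemma rank_add_finrank_ker_toEuclideanLin [Fintype m] {𝕜 : Type*} [RCLike 𝕜] (B : Matrix m n 𝕜) :
    B.rank + Module.finrank 𝕜 (LinearMap.ker (toEuclideanLin B)) = Fintype.card n := by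
  rw [rank_eq_finrank_range_toLin B (EuclideanSpace.basisFun m 𝕜).toBasis
    (EuclideanSpace.basisFun n 𝕜).toBasis, ← toEuclideanLin_eq_toLin_orthonormal,
    LinearMap.finrank_range_add_finrank_ker, finrank_euclideanSpace]

lemma norm_toEuclideanLin_sq [Fintype m] [DecidableEq m] (A : Matrix m n ℝ) (x : EuclideanSpace ℝ n) :
    ‖toEuclideanLin A x‖ ^ 2 = ⟪x, toEuclideanLin (Aᴴ * A) x⟫ := by
  rw [toLpLin_mul_same, LinearMap.comp_apply, toEuclideanLin_conjTranspose_eq_adjoint,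
    LinearMap.adjoint_inner_right, real_inner_self_eq_norm_sq]

lemma toEuclideanLin_apply_eq_inner_row (A : Matrix m n ℝ) (x : EuclideanSpace ℝ n) (r : m) :
    toEuclideanLin A x r = ⟪WithLp.toLp 2 (A r), x⟫ := by
  simp [mulVec, dotProduct, PiLp.inner_apply, mul_comm]

end Matrix

variable {m n : ℕ}

lemma sv_sq (A : Matrix (Fin m) (Fin n) ℝ) (j : Fin n) :
    sv A j ^ 2 = (isHermitian_conjTranspose_mul_self A).eigenvalues
      (Tuple.sort (isHermitian_conjTranspose_mul_self A).eigenvalues j.rev) :=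
  Real.sq_sqrt ((posSemidef_conjTranspose_mul_self A).eigenvalues_nonneg _)

lemma sv_sq_antitone (A : Matrix (Fin m) (Fin n) ℝ) : Antitone fun j => sv A j ^ 2 := by
  intro i j hij
  simp only [sv_sq]
  exact Tuple.monotone_sort (isHermitian_conjTranspose_mul_self A).eigenvalues
    (Fin.rev_le_rev.2 hij)

lemma sum_Ioi_sv_sq_le_sum_norm_sq (A : Matrix (Fin m) (Fin n) ℝ) (i : Fin n)
    {w : Fin (n - 1 - i) → EuclideanSpace ℝ (Fin n)} (hw : Orthonormal ℝ w) :
    ∑ j ∈ Ioi i, sv A j ^ 2 ≤ ∑ l, ‖toEuclideanLin A (w l)‖ ^ 2 := by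
  set hH := isHermitian_conjTranspose_mul_self A
  set e := hH.eigenvectorBasis
  set σ : Equiv.Perm (Fin n) := Fin.revPerm.trans (Tuple.sort hH.eigenvalues)
  -- `t j` is the squared length of the projection of the `j`-th eigenvector onto `span w`.
  set t : Fin n → ℝ := fun j => ∑ l, ⟪e (σ j), w l⟫ ^ 2
  have hσ : ∀ j, sv A j ^ 2 = hH.eigenvalues (σ j) := sv_sq A
  have hrhs : ∑ l, ‖toEuclideanLin A (w l)‖ ^ 2 = ∑ j, sv A j ^ 2 * t j := by
    simp_rw [norm_toEuclideanLin_sq, hH.inner_toEuclideanLin_self, hσ, t, mul_sum]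
    rw [sum_comm, ← Equiv.sum_comp σ]
  have ht₁ : ∀ j, t j ≤ 1 := by
    intro j
    simpa [t, real_inner_comm, e.orthonormal.1 (σ j)] using
      hw.sum_inner_products_le (e (σ j)) (s := univ)
  have ht : ∑ j, t j = #(Ioi i) := by
    have hl : ∀ l, ∑ j, ⟪e (σ j), w l⟫ ^ 2 = 1 := fun l => by
      rw [Equiv.sum_comp σ (fun j => ⟪e j, w l⟫ ^ 2), e.sum_sq_inner_right, hw.1, one_pow]
    simp [t, Fin.card_Ioi, sum_comm (γ := Fin n), hl]
  rw [hrhs]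
  exact sum_le_sum_mul_of_forall_le_of_forall_ge _ t _ (sv A i ^ 2)
    (fun j hj => sv_sq_antitone A (mem_Ioi.1 hj).le)
    (fun j hj => sv_sq_antitone A (not_lt.1 (mt mem_Ioi.2 hj)))
    (fun j => sum_nonneg fun l _ => sq_nonneg _) ht₁ ht

lemma frobNorm_sq (A : Matrix (Fin m) (Fin n) ℝ) : frobNorm A ^ 2 = ∑ i, ∑ j, A i j ^ 2 :=
  Real.sq_sqrt (by positivity)

lemma sum_norm_toEuclideanLin_sq_le_frobNorm_sq {ι : Type*} [Fintype ι]
    (A : Matrix (Fin m) (Fin n) ℝ) {v : ι → EuclideanSpace ℝ (Fin n)} (hv : Orthonormal ℝ v) :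
    ∑ i, ‖toEuclideanLin A (v i)‖ ^ 2 ≤ frobNorm A ^ 2 := by
  simp_rw [EuclideanSpace.real_norm_sq_eq, toEuclideanLin_apply_eq_inner_row]
  rw [frobNorm_sq, sum_comm]
  refine sum_le_sum fun r _ => ?_
  simpa [EuclideanSpace.real_norm_sq_eq, real_inner_comm] using
    hv.sum_inner_products_le (WithLp.toLp 2 (A r)) (s := univ)

lemma norm_sq_apply_add_sum_Ioi_sv_sq_le (A B : Matrix (Fin m) (Fin n) ℝ) (i : Fin n)
    (hB : B.rank ≤ i) {u : EuclideanSpace ℝ (Fin n)} (hu : ‖u‖ = 1) :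
    ‖toEuclideanLin (A - B) u‖ ^ 2 + ∑ j ∈ Ioi i, sv A j ^ 2 ≤ frobNorm (A - B) ^ 2 := by
  have hK : n - 1 - i ≤
      Module.finrank ℝ (LinearMap.ker (toEuclideanLin B) ⊓ (ℝ ∙ u)ᗮ : Submodule ℝ _) := by
    have h₁ := rank_add_finrank_ker_toEuclideanLin B
    have h₂ := (LinearMap.ker (toEuclideanLin B)).finrank_le_finrank_inf_orthogonal_add (ℝ ∙ u)
    have h₃ := finrank_span_singleton (K := ℝ) (norm_ne_zero_iff.1 (hu ▸ one_ne_zero))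
    simp only [Fintype.card_fin] at h₁
    omega
  obtain ⟨w, hw, hwK⟩ := exists_orthonormal_forall_mem _ hK
  have hAw : ∀ l, toEuclideanLin (A - B) (w l) = toEuclideanLin A (w l) := fun l => by
    simp [LinearMap.mem_ker.1 (hwK l).1]
  have huw : ∀ l, ⟪u, w l⟫ = 0 := fun l =>
    (Submodule.mem_orthogonal_singleton_iff_inner_right).1 (hwK l).2
  calc ‖toEuclideanLin (A - B) u‖ ^ 2 + ∑ j ∈ Ioi i, sv A j ^ 2
      ≤ ‖toEuclideanLin (A - B) u‖ ^ 2 + ∑ l, ‖toEuclideanLin (A - B) (w l)‖ ^ 2 := by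
        simpa only [hAw, add_le_add_iff_left] using sum_Ioi_sv_sq_le_sum_norm_sq A i hw
    _ = ∑ l, ‖toEuclideanLin (A - B) ((Fin.cons u w : Fin (n - 1 - i + 1) → _) l)‖ ^ 2 := by
        simp [Fin.sum_univ_succ]
    _ ≤ frobNorm (A - B) ^ 2 :=
        sum_norm_toEuclideanLin_sq_le_frobNorm_sq _ (hw.fin_cons hu huw)

theorem stmt2_general {m n k : ℕ} (hkn : k < n)
    (A B : Matrix (Fin m) (Fin n) ℝ) (hB : B.rank ≤ k) (η : ℝ)
    (hF : frobNorm (A - B) ≤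
      Real.sqrt (η ^ 2 + ∑ j ∈ Finset.univ.filter (fun j : Fin n => k ≤ (j : ℕ)), sv A j ^ 2)) :
    specNorm (A - B) ≤ Real.sqrt (η ^ 2 + sv A ⟨k, hkn⟩ ^ 2) := by
  have hIci : univ.filter (fun j : Fin n => k ≤ (j : ℕ)) = Ici ⟨k, hkn⟩ := by
    ext j
    simp [Fin.le_def]
  rw [hIci, ← add_sum_Ioi_eq_sum_Ici] at hF
  have hfrob := (Real.le_sqrt (x := frobNorm (A - B)) (Real.sqrt_nonneg _) (by positivity)).1 hF
  refine ContinuousLinearMap.opNorm_le_of_unit_norm (Real.sqrt_nonneg _) fun u hu => ?_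
  refine Real.le_sqrt_of_sq_le ?_
  have hu' := norm_sq_apply_add_sum_Ioi_sv_sq_le A B ⟨k, hkn⟩ hB hu
  simp only [LinearMap.coe_toContinuousLinearMap']
  linarith

theorem stmt2 {m n k : ℕ} (hmn : n ≤ m) (hkn : k < n)
    (A B : Matrix (Fin m) (Fin n) ℝ) (hB : B.rank ≤ k) (η : ℝ) (hη : 0 ≤ η)
    (hF : frobNorm (A - B) ≤
      Real.sqrt (η ^ 2 + ∑ j ∈ Finset.univ.filter (fun j : Fin n => k ≤ (j : ℕ)), sv A j ^ 2)) :
    specNorm (A - B) ≤ Real.sqrt (η ^ 2 + sv A ⟨k, hkn⟩ ^ 2) :=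
  stmt2_general hkn A B hB η hF
end

section
/- (Reverse Eckart–Young, singular value part) Let A be an m×n real matrix with singular values σ_1 ≥ ... ≥ σ_n, and let B be a matrix of rank at most k satisfying ‖A − B‖_F ≤ sqrt(η² + Σ_{j=k+1}^n σ_j²) for some η ≥ 0. Then sqrt(Σ_{j=1}^k (σ_j − σ_j(B))²) ≤ η. -/
/-!
By Mirsky's inequality `∑ⱼ (σⱼ(A) - σⱼ(B))² ≤ ‖A - B‖_F²` and `σⱼ(B) = 0` for `j ≥ k`, the tail
`∑_{j ≥ k} σⱼ(A)²` cancels against the hypothesis.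

Expanding both squares, Mirsky's inequality reduces to von Neumann's trace inequality
`⟨A, B⟩_F ≤ ∑ⱼ σⱼ(A) σⱼ(B)`. Take orthonormal eigenbases `(vᵢ)` of `AᵀA` and `(wⱼ)` of `BᵀB`:
the vectors `A vᵢ` are pairwise orthogonal with norms `sᵢ`, the singular values of `A` in some
order, and likewise the `B wⱼ` with norms `tⱼ`. Expanding `vᵢ` in the basis `w` gives
`⟨A, B⟩_F = ∑ᵢ ⟪A vᵢ, B vᵢ⟫ = ∑ᵢⱼ sᵢ tⱼ cᵢⱼ dᵢⱼ`, where `c` is the orthogonal change of basis and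
`d` the matrix of inner products of the normalised families. By AM-GM this is at most
`∑ᵢⱼ sᵢ tⱼ Dᵢⱼ` with `D = (c² + d²) / 2` doubly substochastic (Parseval for `c`, Bessel for `d`).
Padding `D` to a doubly stochastic matrix, Birkhoff's theorem reduces the bound to permutation
matrices, where it is the rearrangement inequality.
-/

open Matrix

open NormedSpace (normalize)
open scoped RealInnerProductSpace

theorem Monovary.sum_elim_zero {ι : Type*} {f g : ι → ℝ} (hfg : Monovary f g) (hf : 0 ≤ f)
    (hg : 0 ≤ g) : Monovary (Sum.elim f (0 : ι → ℝ)) (Sum.elim g 0) := by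
  rintro (i | i) (j | j) hlt
  · exact hfg hlt
  · exact (hlt.not_ge (hg i)).elim
  · exact hf j
  · exact le_rfl

section Rearrangement

variable {ι : Type*} [Fintype ι] [DecidableEq ι] {f g : ι → ℝ}

theorem Monovary.sum_mul_mul_le_of_mem_doublyStochastic (hfg : Monovary f g)
    {M : Matrix ι ι ℝ} (hM : M ∈ doublyStochastic ℝ ι) :
    ∑ i, ∑ j, f i * g j * M i j ≤ ∑ i, f i * g i := by
  have hlin : IsLinearMap ℝ fun M : Matrix ι ι ℝ => ∑ i, ∑ j, f i * g j * M i j :=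
    ⟨fun M N => by simp [mul_add, Finset.sum_add_distrib],
      fun c M => by simp [Finset.mul_sum, mul_left_comm]⟩
  rw [← SetLike.mem_coe, doublyStochastic_eq_convexHull_permMatrix] at hM
  refine convexHull_min ?_ (convex_halfSpace_le hlin _) hM
  rintro _ ⟨σ, rfl⟩
  simpa [PEquiv.toMatrix_apply, eq_comm] using hfg.sum_mul_comp_perm_le_sum_mul (σ := σ)

theorem fromBlocks_mem_doublyStochastic {D : Matrix ι ι ℝ} (hD : ∀ i j, 0 ≤ D i j)
    (hrow : ∀ i, ∑ j, D i j ≤ 1) (hcol : ∀ j, ∑ i, D i j ≤ 1) :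
    fromBlocks D (diagonal fun i => 1 - ∑ j, D i j) (diagonal fun j => 1 - ∑ i, D i j) Dᵀ
      ∈ doublyStochastic ℝ (ι ⊕ ι) := by
  refine mem_doublyStochastic_iff_sum.2 ⟨?_, ?_, ?_⟩
  · rintro (i | i) (j | j) <;>
      simp [diagonal_apply, apply_ite, hD, sub_nonneg, hrow, hcol]
  · rintro (i | i) <;> simp [Fintype.sum_sum_type, diagonal_apply]
  · rintro (j | j) <;> simp [Fintype.sum_sum_type, diagonal_apply]

theorem Monovary.sum_mul_mul_le_of_substochastic (hfg : Monovary f g) (hf : 0 ≤ f) (hg : 0 ≤ g)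
    {D : Matrix ι ι ℝ} (hD : ∀ i j, 0 ≤ D i j) (hrow : ∀ i, ∑ j, D i j ≤ 1)
    (hcol : ∀ j, ∑ i, D i j ≤ 1) :
    ∑ i, ∑ j, f i * g j * D i j ≤ ∑ i, f i * g i := by
  simpa [Fintype.sum_sum_type] using
    (hfg.sum_elim_zero hf hg).sum_mul_mul_le_of_mem_doublyStochastic
      (fromBlocks_mem_doublyStochastic hD hrow hcol)

end Rearrangement

section InnerProduct
variable {E F : Type*} [NormedAddCommGroup E] [InnerProductSpace ℝ E]
  [NormedAddCommGroup F] [InnerProductSpace ℝ F]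

theorem real_inner_eq_norm_mul_norm_mul_inner_normalize (x y : E) :
    ⟪x, y⟫ = ‖x‖ * ‖y‖ * ⟪normalize x, normalize y⟫ := by
  conv_lhs => rw [← NormedSpace.norm_smul_normalize x, ← NormedSpace.norm_smul_normalize y]
  rw [real_inner_smul_left, real_inner_smul_right, mul_assoc]

theorem orthonormal_normalize_of_pairwise_inner_eq_zero {ι : Type*} {f : ι → E}
    (hf : Pairwise fun i j => ⟪f i, f j⟫ = 0) :
    Orthonormal ℝ fun i : {i // f i ≠ 0} => normalize (f i) := by
  refine ⟨fun i => NormedSpace.norm_normalize i.2, fun i j hij => ?_⟩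
  simp only [NormedSpace.normalize, real_inner_smul_left, real_inner_smul_right,
    hf (Subtype.coe_injective.ne hij), mul_zero]

theorem sum_inner_normalize_sq_le_one {ι : Type*} [Fintype ι] {f : ι → E}
    (hf : Pairwise fun i j => ⟪f i, f j⟫ = 0) (y : E) :
    ∑ i, ⟪normalize (f i), normalize y⟫ ^ 2 ≤ 1 := by
  classical
  have hy : ‖normalize y‖ ^ 2 ≤ 1 := by
    by_cases h : y = 0
    · simp [h]
    · simp [NormedSpace.norm_normalize h]
  calc ∑ i, ⟪normalize (f i), normalize y⟫ ^ 2
      = ∑ i : {i // f i ≠ 0}, ⟪normalize (f i), normalize y⟫ ^ 2 := by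
        rw [← Finset.sum_subtype (Finset.univ.filter fun i => f i ≠ 0) (by simp)
          (fun i => ⟪normalize (f i), normalize y⟫ ^ 2), Finset.sum_filter_of_ne]
        intro i _ hi h0
        simp [h0] at hi
    _ ≤ ‖normalize y‖ ^ 2 := by
        simpa using (orthonormal_normalize_of_pairwise_inner_eq_zero hf).sum_inner_products_le
          (𝕜 := ℝ) (normalize y) (s := Finset.univ)
    _ ≤ 1 := hy

theorem sum_inner_apply_le_of_pairwise_inner_eq_zero {ι : Type*} [Fintype ι] [DecidableEq ι]
    (T S : E →ₗ[ℝ] F) (v w : OrthonormalBasis ι ℝ E)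
    (hT : Pairwise fun i j => ⟪T (v i), T (v j)⟫ = 0)
    (hS : Pairwise fun i j => ⟪S (w i), S (w j)⟫ = 0)
    {σ τ : ι → ℝ} (hστ : Monovary σ τ) (eσ eτ : ι ≃ ι)
    (hσ : ∀ i, σ (eσ i) = ‖T (v i)‖) (hτ : ∀ j, τ (eτ j) = ‖S (w j)‖) :
    ∑ i, ⟪T (v i), S (v i)⟫ ≤ ∑ i, σ i * τ i := by
  set c : ι → ι → ℝ := fun i j => ⟪v i, w j⟫
  set d : ι → ι → ℝ := fun i j => ⟪normalize (T (v i)), normalize (S (w j))⟫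
  set D : ι → ι → ℝ := fun i j => (c i j ^ 2 + d i j ^ 2) / 2
  have hexpand : ∀ i, ⟪T (v i), S (v i)⟫ = ∑ j, c i j * (‖T (v i)‖ * ‖S (w j)‖ * d i j) := by
    intro i
    have hSv : S (v i) = ∑ j, c i j • S (w j) := by
      simpa only [map_sum, map_smul, real_inner_comm (v i)] using
        congrArg S (w.sum_repr' (v i)).symm
    rw [hSv, inner_sum]
    refine Finset.sum_congr rfl fun j _ => ?_
    rw [real_inner_smul_right, real_inner_eq_norm_mul_norm_mul_inner_normalize]
  have hrow : ∀ i, ∑ j, D i j ≤ 1 := by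
    intro i
    have hc : ∑ j, c i j ^ 2 = 1 := by simp [c, w.sum_sq_inner_left]
    have hd : ∑ j, d i j ^ 2 ≤ 1 := by
      simpa only [d, real_inner_comm] using sum_inner_normalize_sq_le_one hS (T (v i))
    simp only [D, ← Finset.sum_div, Finset.sum_add_distrib]
    linarith
  have hcol : ∀ j, ∑ i, D i j ≤ 1 := by
    intro j
    have hc : ∑ i, c i j ^ 2 = 1 := by simp [c, v.sum_sq_inner_right]
    have hd : ∑ i, d i j ^ 2 ≤ 1 := sum_inner_normalize_sq_le_one hT (S (w j))
    simp only [D, ← Finset.sum_div, Finset.sum_add_distrib]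
    linarith
  have hσ0 : 0 ≤ σ := fun i => by rw [← eσ.apply_symm_apply i, hσ]; positivity
  have hτ0 : 0 ≤ τ := fun j => by rw [← eτ.apply_symm_apply j, hτ]; positivity
  calc ∑ i, ⟪T (v i), S (v i)⟫
      ≤ ∑ i, ∑ j, ‖T (v i)‖ * ‖S (w j)‖ * D i j := by
        refine Finset.sum_le_sum fun i _ => (hexpand i).trans_le <| Finset.sum_le_sum fun j _ => ?_
        have hcd : c i j * d i j ≤ D i j := by
          simp only [D]; linarith [two_mul_le_add_sq (c i j) (d i j)]
        calc c i j * (‖T (v i)‖ * ‖S (w j)‖ * d i j) = ‖T (v i)‖ * ‖S (w j)‖ * (c i j * d i j) := by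
              ring
          _ ≤ ‖T (v i)‖ * ‖S (w j)‖ * D i j := mul_le_mul_of_nonneg_left hcd (by positivity)
    _ = ∑ i, ∑ j, σ i * τ j * D (eσ.symm i) (eτ.symm j) := by
        refine Fintype.sum_equiv eσ _ _ fun i => Fintype.sum_equiv eτ _ _ fun j => ?_
        simp only [hσ, hτ, Equiv.symm_apply_apply]
    _ ≤ ∑ i, σ i * τ i :=
        hστ.sum_mul_mul_le_of_substochastic hσ0 hτ0 (fun i j => by positivity)
          (fun i => by simpa only [eτ.symm.sum_comp (D (eσ.symm i))] using hrow _)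
          (fun j => by simpa only [eσ.symm.sum_comp (fun i => D i (eτ.symm j))] using hcol _)

theorem OrthonormalBasis.sum_inner_apply_eq [FiniteDimensional ℝ E] [FiniteDimensional ℝ F]
    {ι κ : Type*} [Fintype ι] [Fintype κ] (T S : E →ₗ[ℝ] F) (v : OrthonormalBasis ι ℝ E)
    (v' : OrthonormalBasis κ ℝ E) :
    ∑ i, ⟪T (v i), S (v i)⟫ = ∑ j, ⟪T (v' j), S (v' j)⟫ := by
  simp only [← LinearMap.adjoint_inner_right T, ← LinearMap.comp_apply,
    ← LinearMap.trace_eq_sum_inner]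

end InnerProduct

section Matrix
variable {m n ι : Type*} [Fintype m] [Fintype n] [Fintype ι] [DecidableEq n]

theorem sum_mul_eq_sum_inner_toEuclideanLin (A B : Matrix m n ℝ)
    (v : OrthonormalBasis ι ℝ (EuclideanSpace ℝ n)) :
    ∑ a, ∑ b, A a b * B a b = ∑ i, ⟪toEuclideanLin A (v i), toEuclideanLin B (v i)⟫ := by
  rw [OrthonormalBasis.sum_inner_apply_eq _ _ v (EuclideanSpace.basisFun n ℝ), Finset.sum_comm]
  simp [EuclideanSpace.inner_eq_star_dotProduct, dotProduct, mulVec, Pi.single_apply, mul_comm]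

theorem inner_toEuclideanLin_eigenvectorBasis [DecidableEq m] (A : Matrix m n ℝ) (i j : n) :
    ⟪toEuclideanLin A ((isHermitian_conjTranspose_mul_self A).eigenvectorBasis i),
      toEuclideanLin A ((isHermitian_conjTranspose_mul_self A).eigenvectorBasis j)⟫ =
      (isHermitian_conjTranspose_mul_self A).eigenvalues j *
        ⟪(isHermitian_conjTranspose_mul_self A).eigenvectorBasis i,
          (isHermitian_conjTranspose_mul_self A).eigenvectorBasis j⟫ := by
  rw [← LinearMap.adjoint_inner_right, ← toEuclideanLin_conjTranspose_eq_adjoint,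
    toLpLin_apply, toLpLin_apply, WithLp.ofLp_toLp, mulVec_mulVec,
    (isHermitian_conjTranspose_mul_self A).mulVec_eigenvectorBasis]
  simp [real_inner_smul_right]

theorem norm_toEuclideanLin_eigenvectorBasis [DecidableEq m] (A : Matrix m n ℝ) (i : n) :
    ‖toEuclideanLin A ((isHermitian_conjTranspose_mul_self A).eigenvectorBasis i)‖ =
      √((isHermitian_conjTranspose_mul_self A).eigenvalues i) := by
  rw [norm_eq_sqrt_real_inner, inner_toEuclideanLin_eigenvectorBasis, real_inner_self_eq_norm_sq,
    (isHermitian_conjTranspose_mul_self A).eigenvectorBasis.orthonormal.1 i, one_pow, mul_one]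

end Matrix

section SingularValues
variable {m n : ℕ}

theorem sv_antitone (A : Matrix (Fin m) (Fin n) ℝ) : Antitone (sv A) := fun _ _ hij =>
  Real.sqrt_le_sqrt (Tuple.monotone_sort _ (Fin.rev_le_rev.mpr hij))

theorem exists_equiv_sv_eq_sqrt_eigenvalues (A : Matrix (Fin m) (Fin n) ℝ) :
    ∃ e : Fin n ≃ Fin n,
      ∀ i, sv A (e i) = √((isHermitian_conjTranspose_mul_self A).eigenvalues i) :=
  ⟨(Tuple.sort (isHermitian_conjTranspose_mul_self A).eigenvalues).symm.trans Fin.revPerm,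
    fun i => by simp [sv]⟩

theorem card_sv_ne_zero (A : Matrix (Fin m) (Fin n) ℝ) :
    (Finset.univ.filter fun j => sv A j ≠ 0).card = A.rank := by
  obtain ⟨e, he⟩ := exists_equiv_sv_eq_sqrt_eigenvalues A
  rw [← rank_conjTranspose_mul_self,
    (isHermitian_conjTranspose_mul_self A).rank_eq_card_non_zero_eigs, Fintype.card_subtype]
  refine (Finset.card_equiv e fun i => ?_).symm
  simpa [he] using (Real.sqrt_eq_zero (eigenvalues_conjTranspose_mul_self_nonneg A i)).not.symm

theorem sv_eq_zero_of_rank_le {k : ℕ} {A : Matrix (Fin m) (Fin n) ℝ} (hA : A.rank ≤ k) {i : Fin n}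
    (hi : k ≤ i) : sv A i = 0 := by
  by_contra h
  have hpos : 0 < sv A i := (Real.sqrt_nonneg _).lt_of_ne' h
  have hsub : Finset.Iic i ⊆ Finset.univ.filter fun j => sv A j ≠ 0 := fun j hj =>
    Finset.mem_filter.2 ⟨Finset.mem_univ j,
      (hpos.trans_le (sv_antitone A (Finset.mem_Iic.1 hj))).ne'⟩
  have := Finset.card_le_card hsub
  rw [Fin.card_Iic, card_sv_ne_zero] at this
  omega

theorem sum_sv_sq (A : Matrix (Fin m) (Fin n) ℝ) :
    ∑ i, sv A i ^ 2 = ∑ a, ∑ b, A a b ^ 2 := by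
  obtain ⟨e, he⟩ := exists_equiv_sv_eq_sqrt_eigenvalues A
  simp_rw [sq (A _ _)]
  rw [sum_mul_eq_sum_inner_toEuclideanLin A A
    (isHermitian_conjTranspose_mul_self A).eigenvectorBasis, ← e.sum_comp]
  simp only [he, real_inner_self_eq_norm_sq, norm_toEuclideanLin_eigenvectorBasis]

theorem sum_mul_le_sum_sv_mul_sv (A B : Matrix (Fin m) (Fin n) ℝ) :
    ∑ a, ∑ b, A a b * B a b ≤ ∑ i, sv A i * sv B i := by
  obtain ⟨eA, heA⟩ := exists_equiv_sv_eq_sqrt_eigenvalues A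
  obtain ⟨eB, heB⟩ := exists_equiv_sv_eq_sqrt_eigenvalues B
  have horth (M : Matrix (Fin m) (Fin n) ℝ) : Pairwise fun i j =>
      ⟪toEuclideanLin M ((isHermitian_conjTranspose_mul_self M).eigenvectorBasis i),
        toEuclideanLin M ((isHermitian_conjTranspose_mul_self M).eigenvectorBasis j)⟫ = 0 :=
    fun i j hij => by
      dsimp only
      rw [inner_toEuclideanLin_eigenvectorBasis,
        (isHermitian_conjTranspose_mul_self M).eigenvectorBasis.orthonormal.2 hij, mul_zero]
  rw [sum_mul_eq_sum_inner_toEuclideanLin A B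
    (isHermitian_conjTranspose_mul_self A).eigenvectorBasis]
  exact sum_inner_apply_le_of_pairwise_inner_eq_zero _ _ _ _ (horth A) (horth B)
    ((sv_antitone A).monovary (sv_antitone B)) eA eB
    (fun i => by rw [heA, norm_toEuclideanLin_eigenvectorBasis])
    (fun j => by rw [heB, norm_toEuclideanLin_eigenvectorBasis])

theorem sum_sv_sub_sq_le (A B : Matrix (Fin m) (Fin n) ℝ) :
    ∑ i, (sv A i - sv B i) ^ 2 ≤ ∑ a, ∑ b, (A a b - B a b) ^ 2 := by
  have hsv : ∑ i, (sv A i - sv B i) ^ 2 =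
      ∑ i, sv A i ^ 2 + ∑ i, sv B i ^ 2 - 2 * ∑ i, sv A i * sv B i := by
    simp only [sub_sq, Finset.sum_add_distrib, Finset.sum_sub_distrib, Finset.mul_sum, mul_assoc]
    ring
  have hentry : ∑ a, ∑ b, (A a b - B a b) ^ 2 =
      ∑ a, ∑ b, A a b ^ 2 + ∑ a, ∑ b, B a b ^ 2 - 2 * ∑ a, ∑ b, A a b * B a b := by
    simp only [sub_sq, Finset.sum_add_distrib, Finset.sum_sub_distrib, Finset.mul_sum, mul_assoc]
    ring
  rw [hsv, hentry, sum_sv_sq, sum_sv_sq]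
  linarith [sum_mul_le_sum_sv_mul_sv A B]

end SingularValues

theorem stmt3_general {m n k : ℕ}
    (A B : Matrix (Fin m) (Fin n) ℝ) (hB : B.rank ≤ k) (η : ℝ) (hη : 0 ≤ η)
    (hF : frobNorm (A - B) ≤
      Real.sqrt (η ^ 2 + ∑ j ∈ Finset.univ.filter (fun j : Fin n => k ≤ (j : ℕ)), sv A j ^ 2)) :
    Real.sqrt (∑ j ∈ Finset.univ.filter (fun j : Fin n => (j : ℕ) < k),
      (sv A j - sv B j) ^ 2) ≤ η := by
  have htail : ∑ i, (sv A i - sv B i) ^ 2 =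
      ∑ j ∈ Finset.univ.filter (fun j : Fin n => (j : ℕ) < k), (sv A j - sv B j) ^ 2 +
        ∑ j ∈ Finset.univ.filter (fun j : Fin n => k ≤ (j : ℕ)), sv A j ^ 2 := by
    rw [← Finset.sum_filter_add_sum_filter_not Finset.univ (fun j : Fin n => (j : ℕ) < k)]
    simp_rw [not_lt]
    refine congrArg _ (Finset.sum_congr rfl fun j hj => ?_)
    rw [sv_eq_zero_of_rank_le hB (Finset.mem_filter.1 hj).2, sub_zero]
  have hF2 : ∑ a, ∑ b, (A a b - B a b) ^ 2 ≤
      η ^ 2 + ∑ j ∈ Finset.univ.filter (fun j : Fin n => k ≤ (j : ℕ)), sv A j ^ 2 :=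
    (Real.sqrt_le_sqrt_iff (by positivity)).1 hF
  rw [Real.sqrt_le_left hη]
  linarith [sum_sv_sub_sq_le A B]

theorem stmt3 {m n k : ℕ} (hmn : n ≤ m) (hkn : k ≤ n)
    (A B : Matrix (Fin m) (Fin n) ℝ) (hB : B.rank ≤ k) (η : ℝ) (hη : 0 ≤ η)
    (hF : frobNorm (A - B) ≤
      Real.sqrt (η ^ 2 + ∑ j ∈ Finset.univ.filter (fun j : Fin n => k ≤ (j : ℕ)), sv A j ^ 2)) :
    Real.sqrt (∑ j ∈ Finset.univ.filter (fun j : Fin n => (j : ℕ) < k),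
      (sv A j - sv B j) ^ 2) ≤ η :=
  stmt3_general A B hB η hη hF
end

section
/- Let Q be an m×ℓ matrix with orthonormal columns, 1 ≤ k ≤ ℓ, and let B_k be the rank-k truncated SVD of QᵀA. Then B_k minimizes ‖A − QB‖_F over all ℓ×n matrices B of rank at most k. -/
open Matrix

/-!
Because `Q` has orthonormal columns, Pythagoras gives
`‖A - Q B‖² = ‖A - Q Qᵀ A‖² + ‖Qᵀ A - B‖²` for every `B`, so the claim reduces to the
Eckart–Young theorem for `Qᵀ A = W Σ Vᵀ`. Conjugating by the singular vectors, it suffices to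
compare `Σ` with a matrix `C` of rank at most `k`: `C` vanishes on an `(r - k)`-dimensional
subspace, and the mass that `Σ` puts on that subspace is at least `∑_{i ≥ k} σᵢ²`.
-/

section FrobeniusNormSq

variable {m n p : Type*} [Fintype m] [Fintype n] [Fintype p]

noncomputable def frobNormSq (A : Matrix m n ℝ) : ℝ := ∑ i, ∑ j, A i j ^ 2

lemma frobNormSq_nonneg (A : Matrix m n ℝ) : 0 ≤ frobNormSq A :=
  Finset.sum_nonneg fun _ _ => Finset.sum_nonneg fun _ _ => sq_nonneg _

lemma frobNormSq_eq_trace (A : Matrix m n ℝ) : frobNormSq A = trace (Aᵀ * A) := by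
  simp only [frobNormSq, trace, diag, mul_apply, transpose_apply, sq]
  exact Finset.sum_comm

lemma frobNormSq_transpose (A : Matrix m n ℝ) : frobNormSq Aᵀ = frobNormSq A :=
  Finset.sum_comm

lemma frobNormSq_add_of_transpose_mul_eq_zero {A B : Matrix m n ℝ} (h : Aᵀ * B = 0) :
    frobNormSq (A + B) = frobNormSq A + frobNormSq B := by
  have h' : Bᵀ * A = 0 := by rw [← transpose_transpose A, ← transpose_mul, h, transpose_zero]
  rw [frobNormSq_eq_trace, frobNormSq_eq_trace, frobNormSq_eq_trace, transpose_add,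
    Matrix.add_mul, Matrix.mul_add, Matrix.mul_add, h, h', add_zero, zero_add, trace_add]

lemma frobNormSq_mul_of_transpose_mul_self [DecidableEq n] {U : Matrix m n ℝ} (hU : Uᵀ * U = 1)
    (A : Matrix n p ℝ) :
    frobNormSq (U * A) = frobNormSq A := by
  rw [frobNormSq_eq_trace, frobNormSq_eq_trace, transpose_mul, Matrix.mul_assoc,
    ← Matrix.mul_assoc Uᵀ, hU, Matrix.one_mul]

lemma frobNormSq_of_transpose_mul_self [DecidableEq n] {U : Matrix m n ℝ} (hU : Uᵀ * U = 1) :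
    frobNormSq U = Fintype.card n := by
  rw [frobNormSq_eq_trace, hU, trace_one, Fintype.card]

/-- Pythagoras for the orthogonal projection `U Uᵀ`. -/
lemma frobNormSq_transpose_mul_le [DecidableEq n] {U : Matrix m n ℝ} (hU : Uᵀ * U = 1)
    (A : Matrix m p ℝ) :
    frobNormSq (Uᵀ * A) ≤ frobNormSq A := by
  have horth : (U * (Uᵀ * A))ᵀ * (A - U * (Uᵀ * A)) = 0 := by
    simp only [transpose_mul, transpose_transpose, Matrix.mul_sub, Matrix.mul_assoc]
    rw [← Matrix.mul_assoc Uᵀ U, hU, Matrix.one_mul, sub_self]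
  have hsplit := frobNormSq_add_of_transpose_mul_eq_zero horth
  rw [add_sub_cancel, frobNormSq_mul_of_transpose_mul_self hU] at hsplit
  linarith [frobNormSq_nonneg (A - U * (Uᵀ * A))]

lemma frobNormSq_mul_le [DecidableEq p] {U : Matrix n p ℝ} (hU : Uᵀ * U = 1) (A : Matrix m n ℝ) :
    frobNormSq (A * U) ≤ frobNormSq A := by
  rw [← frobNormSq_transpose, transpose_mul, ← frobNormSq_transpose A]
  exact frobNormSq_transpose_mul_le hU Aᵀ

lemma sum_sq_row_le_one [DecidableEq n] {U : Matrix m n ℝ} (hU : Uᵀ * U = 1) (i : m) :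
    ∑ j, U i j ^ 2 ≤ 1 := by
  classical
  have h := frobNormSq_mul_le hU (replicateRow Unit (Pi.single i 1))
  simpa [frobNormSq, mul_apply, Pi.single_apply] using h

lemma frobNormSq_mul_diagonal_mul {r : Type*} [Fintype r] [DecidableEq r]
    {W : Matrix m r ℝ} {V : Matrix n r ℝ} (hW : Wᵀ * W = 1) (hV : Vᵀ * V = 1) (d : r → ℝ) :
    frobNormSq (W * diagonal d * Vᵀ) = ∑ j, d j ^ 2 := by
  rw [Matrix.mul_assoc, frobNormSq_mul_of_transpose_mul_self hW, ← frobNormSq_transpose,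
    transpose_mul, diagonal_transpose, transpose_transpose,
    frobNormSq_mul_of_transpose_mul_self hV]
  simp [frobNormSq, diagonal_apply, ite_pow]

end FrobeniusNormSq

lemma exists_orthonormal_mul_eq_zero {m n : Type*} [Fintype m] [Fintype n] [DecidableEq n]
    (C : Matrix m n ℝ) {k : ℕ} (hC : C.rank ≤ k) :
    ∃ U : Matrix n (Fin (Fintype.card n - k)) ℝ, Uᵀ * U = 1 ∧ C * U = 0 := by
  have hK : Fintype.card n - k ≤ Module.finrank ℝ (LinearMap.ker (toEuclideanLin C)) := by
    have hsum := LinearMap.finrank_range_add_finrank_ker (toEuclideanLin C)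
    rw [finrank_euclideanSpace, toEuclideanLin_eq_toLin_orthonormal,
      ← rank_eq_finrank_range_toLin] at hsum
    rw [toEuclideanLin_eq_toLin_orthonormal]
    omega
  let v := stdOrthonormalBasis ℝ (LinearMap.ker (toEuclideanLin C)) ∘ Fin.castLE hK
  have hv : Orthonormal ℝ v :=
    (stdOrthonormalBasis ℝ _).orthonormal.comp _ (Fin.castLE_injective hK)
  refine ⟨of fun i j => (v j : EuclideanSpace ℝ n) i, ?_, ?_⟩
  · ext a b
    have hab := orthonormal_iff_ite.mp hv a b
    simp only [Submodule.coe_inner, PiLp.inner_apply, RCLike.inner_apply, conj_trivial] at hab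
    simp only [mul_apply, transpose_apply, of_apply, one_apply, ← hab]
    exact Finset.sum_congr rfl fun _ _ => mul_comm _ _
  · ext i j
    exact congrArg (fun x : EuclideanSpace ℝ m => x i) (LinearMap.mem_ker.mp (v j).2)

lemma sum_le_sum_mul_of_fractional_indicator {ι : Type*} [Fintype ι] [DecidableEq ι]
    (s : Finset ι) (a t : ι → ℝ) (c : ℝ) (ht0 : ∀ i, 0 ≤ t i) (ht1 : ∀ i, t i ≤ 1)
    (hsum : ∑ i, t i = s.card) (has : ∀ i ∈ s, a i ≤ c) (hsa : ∀ i ∉ s, c ≤ a i) :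
    ∑ i ∈ s, a i ≤ ∑ i, a i * t i := by
  have hterm : ∀ i, (a i - c) * ((if i ∈ s then 1 else 0) - t i) ≤ 0 := fun i => by
    by_cases hi : i ∈ s
    · simp only [hi, if_true]
      exact mul_nonpos_of_nonpos_of_nonneg (by linarith [has i hi]) (by linarith [ht1 i])
    · simp only [hi, if_false, zero_sub]
      exact mul_nonpos_of_nonneg_of_nonpos (by linarith [hsa i hi]) (by linarith [ht0 i])
  have hexpand : ∑ i, (a i - c) * ((if i ∈ s then 1 else 0) - t i)
      = ∑ i ∈ s, a i - ∑ i, a i * t i - c * (s.card - ∑ i, t i) := by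
    simp only [mul_sub, sub_mul, mul_ite, mul_one, mul_zero, Finset.sum_sub_distrib,
      Finset.sum_ite_mem, Finset.univ_inter, Finset.sum_const, nsmul_eq_mul, Finset.mul_sum]
    ring
  rw [hsum, sub_self, mul_zero, sub_zero] at hexpand
  linarith [Finset.sum_nonpos fun i (_ : i ∈ Finset.univ) => hterm i]

/-- Eckart–Young for a diagonal matrix. The weights `tᵢ = ∑ⱼ Uᵢⱼ²` of an orthonormal basis `U`
of a subspace killed by `C` satisfy `0 ≤ tᵢ ≤ 1` and `∑ tᵢ = r - k`, so the mass
`∑ σᵢ² tᵢ` of `diagonal σ` on it is at least the tail sum. -/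
lemma sum_sq_tail_le_frobNormSq_diagonal_sub {r k : ℕ} {σ : Fin r → ℝ} (hσ : Antitone σ)
    (hσ0 : ∀ j, 0 ≤ σ j) {C : Matrix (Fin r) (Fin r) ℝ} (hC : C.rank ≤ k) :
    ∑ j : Fin r, (if (j : ℕ) < k then 0 else σ j) ^ 2 ≤ frobNormSq (diagonal σ - C) := by
  rcases le_or_gt r k with hrk | hkr
  · have hzero : ∀ j : Fin r, (if (j : ℕ) < k then 0 else σ j) ^ 2 = 0 := fun j => by
      rw [if_pos (j.2.trans_le hrk), sq, mul_zero]
    simpa only [hzero, Finset.sum_const_zero] using frobNormSq_nonneg _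
  set κ : Fin r := ⟨k, hkr⟩
  obtain ⟨U, hU, hCU⟩ := exists_orthonormal_mul_eq_zero C hC
  have htail :
      ∑ j : Fin r, (if (j : ℕ) < k then 0 else σ j) ^ 2 = ∑ j ∈ Finset.Ici κ, σ j ^ 2 := by
    rw [← Finset.univ_inter (Finset.Ici κ), ← Finset.sum_ite_mem]
    refine Finset.sum_congr rfl fun j _ => ?_
    by_cases hj : (j : ℕ) < k
    · have : j ∉ Finset.Ici κ := by simp [Fin.le_def, κ, hj]
      simp [hj, this]
    · have : j ∈ Finset.Ici κ := by simp [Fin.le_def, κ]; omega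
      simp [hj, this]
  have hrows : ∑ i, ∑ j, U i j ^ 2 = (Finset.Ici κ).card := by
    rw [← frobNormSq, frobNormSq_of_transpose_mul_self hU, Fintype.card_fin, Fintype.card_fin,
      Fin.card_Ici]
  have hmass : ∑ i, σ i ^ 2 * ∑ j, U i j ^ 2 = frobNormSq ((diagonal σ - C) * U) := by
    simp only [Matrix.sub_mul, hCU, sub_zero, frobNormSq, diagonal_mul, mul_pow, Finset.mul_sum]
  rw [htail]
  calc ∑ j ∈ Finset.Ici κ, σ j ^ 2
      ≤ ∑ i, σ i ^ 2 * ∑ j, U i j ^ 2 :=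
        sum_le_sum_mul_of_fractional_indicator _ _ _ (σ κ ^ 2)
          (fun i => Finset.sum_nonneg fun j _ => sq_nonneg (U i j)) (sum_sq_row_le_one hU) hrows
          (fun i hi => pow_le_pow_left₀ (hσ0 i) (hσ (Finset.mem_Ici.mp hi)) 2)
          (fun i hi => pow_le_pow_left₀ (hσ0 κ) (hσ (not_le.mp (Finset.mem_Ici.not.mp hi)).le) 2)
    _ = frobNormSq ((diagonal σ - C) * U) := hmass
    _ ≤ frobNormSq (diagonal σ - C) := frobNormSq_mul_le hU _

lemma frobNormSq_sub_mul_eq {m n l : Type*} [Fintype m] [Fintype n] [Fintype l] [DecidableEq l]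
    {Q : Matrix m l ℝ} (hQ : Qᵀ * Q = 1) (A : Matrix m n ℝ) (X : Matrix l n ℝ) :
    frobNormSq (A - Q * X) = frobNormSq (A - Q * (Qᵀ * A)) + frobNormSq (Qᵀ * A - X) := by
  have horth : (A - Q * (Qᵀ * A))ᵀ * (Q * (Qᵀ * A - X)) = 0 := by
    simp only [transpose_sub, transpose_mul, transpose_transpose, Matrix.sub_mul,
      Matrix.mul_assoc]
    rw [← Matrix.mul_assoc Qᵀ Q, hQ, Matrix.one_mul, sub_self]
  rw [← frobNormSq_mul_of_transpose_mul_self hQ (Qᵀ * A - X),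
    ← frobNormSq_add_of_transpose_mul_eq_zero horth, Matrix.mul_sub]
  congr 1
  abel

theorem stmt5_general {m n l k : ℕ}
    (A : Matrix (Fin m) (Fin n) ℝ) (Q : Matrix (Fin m) (Fin l) ℝ) (hQ : Qᵀ * Q = 1)
    (W : Matrix (Fin l) (Fin (min l n)) ℝ) (V : Matrix (Fin n) (Fin (min l n)) ℝ)
    (σ : Fin (min l n) → ℝ) (hW : Wᵀ * W = 1) (hV : Vᵀ * V = 1)
    (hσanti : Antitone σ) (hσ0 : ∀ j, 0 ≤ σ j)
    (hQA : Qᵀ * A = W * Matrix.diagonal σ * Vᵀ)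
    (Bk : Matrix (Fin l) (Fin n) ℝ)
    (hBk : Bk = W * Matrix.diagonal (fun j : Fin (min l n) => if (j : ℕ) < k then σ j else 0) * Vᵀ)
    (B : Matrix (Fin l) (Fin n) ℝ) (hB : B.rank ≤ k) :
    frobNorm (A - Q * Bk) ≤ frobNorm (A - Q * B) := by
  have hBk_err : Qᵀ * A - Bk
      = W * diagonal (fun j : Fin (min l n) => if (j : ℕ) < k then 0 else σ j) * Vᵀ := by
    rw [hQA, hBk, ← Matrix.sub_mul, ← Matrix.mul_sub, diagonal_sub]
    congr 3
    ext j
    split_ifs <;> simp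
  have hrank : (Wᵀ * B * V).rank ≤ k :=
    ((rank_mul_le_left _ _).trans (rank_mul_le_right _ _)).trans hB
  have hB_err : frobNormSq (diagonal σ - Wᵀ * B * V) ≤ frobNormSq (Qᵀ * A - B) := by
    have hconj : Wᵀ * (Qᵀ * A - B) * V = diagonal σ - Wᵀ * B * V := by
      rw [hQA, Matrix.mul_sub, Matrix.sub_mul]
      simp only [Matrix.mul_assoc, hV, Matrix.mul_one]
      rw [← Matrix.mul_assoc Wᵀ, hW, Matrix.one_mul]
    rw [← hconj]
    exact (frobNormSq_mul_le hV _).trans (frobNormSq_transpose_mul_le hW _)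
  show √(frobNormSq _) ≤ √(frobNormSq _)
  refine Real.sqrt_le_sqrt ?_
  rw [frobNormSq_sub_mul_eq hQ A Bk, frobNormSq_sub_mul_eq hQ A B, hBk_err,
    frobNormSq_mul_diagonal_mul hW hV]
  linarith [sum_sq_tail_le_frobNormSq_diagonal_sub hσanti hσ0 hrank]

theorem stmt5 {m n l k : ℕ} (hk : 1 ≤ k) (hkl : k ≤ l)
    (A : Matrix (Fin m) (Fin n) ℝ) (Q : Matrix (Fin m) (Fin l) ℝ) (hQ : Qᵀ * Q = 1)
    (W : Matrix (Fin l) (Fin (min l n)) ℝ) (V : Matrix (Fin n) (Fin (min l n)) ℝ)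
    (σ : Fin (min l n) → ℝ) (hW : Wᵀ * W = 1) (hV : Vᵀ * V = 1)
    (hσanti : Antitone σ) (hσ0 : ∀ j, 0 ≤ σ j)
    (hQA : Qᵀ * A = W * Matrix.diagonal σ * Vᵀ)
    (Bk : Matrix (Fin l) (Fin n) ℝ)
    (hBk : Bk = W * Matrix.diagonal (fun j : Fin (min l n) => if (j : ℕ) < k then σ j else 0) * Vᵀ)
    (B : Matrix (Fin l) (Fin n) ℝ) (hB : B.rank ≤ k) :
    frobNorm (A - Q * Bk) ≤ frobNorm (A - Q * B) :=
  stmt5_general A Q hQ W V σ hW hV hσanti hσ0 hQA Bk hBk B hB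
end

section
/- Let H₁ and Σ₁ be matrices with Σ₁ = diag(σ₁,...,σ_k) diagonal positive, where H₁ has k columns. Then the Frobenius-norm quantity satisfies sqrt(trace(Σ₁H₁ᵀ(I + H₁H₁ᵀ)^{-1}H₁Σ₁)) ≤ (√k · ‖H₁Σ₁‖₂ · σ₁) / sqrt(σ₁² + ‖H₁Σ₁‖₂²). -/
open Matrix

/-!
Write `h_j` for the `j`-th column of `H₁`, so the trace is `∑ j, σ_j² h_jᵀ (I + H₁H₁ᵀ)⁻¹ h_j`.
For `x = (I + H₁H₁ᵀ)⁻¹ h_j` and `v = h_jᵀ x` we have `v = ‖x‖² + ‖H₁ᵀ x‖² ≥ ‖x‖² + v²`, because the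
`j`-th entry of `H₁ᵀ x` is `v`; with Cauchy–Schwarz `v² ≤ ‖h_j‖² ‖x‖²` this gives
`v ≤ ‖h_j‖² / (1 + ‖h_j‖²)`. Hence the `j`-th term is at most `a c / (a + c)` with `a = σ_j²` and
`c = σ_j² ‖h_j‖²`, the squared norm of a column of `H₁Σ₁`, so `c ≤ ‖H₁Σ₁‖₂²`. As `a c / (a + c)`
increases in both `a` and `c`, every term is at most `σ₁² ‖H₁Σ₁‖₂² / (σ₁² + ‖H₁Σ₁‖₂²)`.
-/

lemma sum_sq_col_le_specNorm_sq {m n : ℕ} (A : Matrix (Fin m) (Fin n) ℝ) (j : Fin n) :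
    ∑ i, A i j ^ 2 ≤ specNorm A ^ 2 := by
  set T := (Matrix.toEuclideanLin A).toContinuousLinearMap
  set e : EuclideanSpace ℝ (Fin n) := EuclideanSpace.single j 1
  have hTe : ‖T e‖ ^ 2 = ∑ i, A i j ^ 2 := by
    rw [EuclideanSpace.real_norm_sq_eq]
    congr! 2 with i
    simp [T, e, Matrix.toEuclideanLin, Matrix.mulVec, dotProduct, Pi.single_apply]
  have hTe_le : ‖T e‖ ≤ specNorm A := by
    simpa [e, specNorm] using T.le_opNorm e
  rw [← hTe]
  gcongr

lemma col_dotProduct_inv_one_add_mul_transpose_mulVec_col_le {m n : Type*} [Fintype m] [Fintype n]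
    [DecidableEq m] (H : Matrix m n ℝ) (j : n) :
    (Hᵀ j ⬝ᵥ (1 + H * Hᵀ)⁻¹ *ᵥ Hᵀ j) * (1 + Hᵀ j ⬝ᵥ Hᵀ j) ≤ Hᵀ j ⬝ᵥ Hᵀ j := by
  set h := Hᵀ j
  set x := (1 + H * Hᵀ)⁻¹ *ᵥ h
  set v := h ⬝ᵥ x
  have hdet : IsUnit (1 + H * Hᵀ).det := by
    rw [← Matrix.isUnit_iff_isUnit_det]
    exact (Matrix.PosDef.one.add_posSemidef (Matrix.posSemidef_self_mul_conjTranspose H)).isUnit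
  have hx : (1 + H * Hᵀ) *ᵥ x = h := by
    rw [Matrix.mulVec_mulVec, Matrix.mul_nonsing_inv _ hdet, Matrix.one_mulVec]
  clear_value x
  have hv : v = x ⬝ᵥ x + (Hᵀ *ᵥ x) ⬝ᵥ (Hᵀ *ᵥ x) := by
    rw [show v = x ⬝ᵥ h from dotProduct_comm h x, ← hx, Matrix.add_mulVec, Matrix.one_mulVec,
      dotProduct_add, ← Matrix.mulVec_mulVec, dotProduct_mulVec, ← Matrix.mulVec_transpose]
  have hv_sq_le : v ^ 2 ≤ (Hᵀ *ᵥ x) ⬝ᵥ (Hᵀ *ᵥ x) := by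
    have hv_entry : (Hᵀ *ᵥ x) j = v := rfl
    rw [← hv_entry, sq]
    exact Finset.single_le_sum (f := fun i => (Hᵀ *ᵥ x) i * (Hᵀ *ᵥ x) i)
      (fun i _ => mul_self_nonneg _) (Finset.mem_univ j)
  have hcs : v ^ 2 ≤ (h ⬝ᵥ h) * (x ⬝ᵥ x) := by
    simpa only [v, dotProduct, sq] using Finset.sum_mul_sq_le_sq_mul_sq Finset.univ h x
  have hxx : 0 ≤ x ⬝ᵥ x := Finset.sum_nonneg fun i _ => mul_self_nonneg (x i)
  have hhh : 0 ≤ h ⬝ᵥ h := Finset.sum_nonneg fun i _ => mul_self_nonneg (h i)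
  have hv_nonneg : 0 ≤ v := by nlinarith
  rcases hv_nonneg.eq_or_lt with hv0 | hv_pos
  · rw [← hv0, zero_mul]; exact hhh
  · nlinarith

lemma trace_diagonal_mul_transpose_mul_mul_mul_diagonal {R m n : Type*} [CommSemiring R]
    [Fintype m] [Fintype n] [DecidableEq n] (d : n → R) (B : Matrix m n R) (M : Matrix m m R) :
    (diagonal d * Bᵀ * M * B * diagonal d).trace = ∑ j, d j ^ 2 * (Bᵀ j ⬝ᵥ M *ᵥ Bᵀ j) := by
  refine Finset.sum_congr rfl fun j _ => ?_
  have hBMB : (Bᵀ * M * B) j j = Bᵀ j ⬝ᵥ M *ᵥ Bᵀ j := by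
    simp only [Matrix.mul_apply, dotProduct, Matrix.mulVec, Matrix.transpose_apply,
      Finset.mul_sum, Finset.sum_mul]
    rw [Finset.sum_comm]
    exact Finset.sum_congr rfl fun _ _ => Finset.sum_congr rfl fun _ _ => by ring
  rw [show diagonal d * Bᵀ * M * B * diagonal d = diagonal d * (Bᵀ * M * B) * diagonal d by
    simp only [Matrix.mul_assoc], Matrix.diag_apply, Matrix.mul_diagonal, Matrix.diagonal_mul, hBMB]
  ring

lemma mul_div_one_add_le_mul_div_add {a b c s : ℝ} (ha : 0 ≤ a) (hab : a ≤ b) (hb : 0 < b)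
    (hs : 0 ≤ s) (hc : a * s ≤ c) : a * (s / (1 + s)) ≤ b * c / (b + c) := by
  have hc0 : 0 ≤ c := (mul_nonneg ha hs).trans hc
  rw [mul_div_assoc', div_le_div_iff₀ (by positivity) (by positivity)]
  nlinarith [mul_le_mul_of_nonneg_left hc hb.le, mul_le_mul_of_nonneg_right hab (mul_nonneg hc0 hs)]

lemma sq_mul_col_dotProduct_inv_one_add_mul_transpose_mulVec_col_le {p k : ℕ} (σ : Fin k → ℝ)
    (H : Matrix (Fin p) (Fin k) ℝ) (j : Fin k) {b : ℝ} (hb : 0 < b) (hσj : σ j ^ 2 ≤ b) :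
    σ j ^ 2 * (Hᵀ j ⬝ᵥ (1 + H * Hᵀ)⁻¹ *ᵥ Hᵀ j) ≤
      b * specNorm (H * diagonal σ) ^ 2 / (b + specNorm (H * diagonal σ) ^ 2) := by
  have hs : 0 ≤ Hᵀ j ⬝ᵥ Hᵀ j := Finset.sum_nonneg fun i _ => mul_self_nonneg _
  have hcol : σ j ^ 2 * (Hᵀ j ⬝ᵥ Hᵀ j) ≤ specNorm (H * diagonal σ) ^ 2 := by
    convert sum_sq_col_le_specNorm_sq (H * diagonal σ) j using 1
    simp only [dotProduct, Finset.mul_sum, Matrix.mul_diagonal, Matrix.transpose_apply]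
    exact Finset.sum_congr rfl fun i _ => by ring
  calc σ j ^ 2 * (Hᵀ j ⬝ᵥ (1 + H * Hᵀ)⁻¹ *ᵥ Hᵀ j)
      ≤ σ j ^ 2 * (Hᵀ j ⬝ᵥ Hᵀ j / (1 + Hᵀ j ⬝ᵥ Hᵀ j)) := by
        gcongr
        rw [le_div_iff₀ (by positivity)]
        exact col_dotProduct_inv_one_add_mul_transpose_mulVec_col_le H j
    _ ≤ _ := mul_div_one_add_le_mul_div_add (sq_nonneg _) hσj hb hs hcol

theorem stmt12 {p k : ℕ} (hk : 0 < k) (σ : Fin k → ℝ)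
    (hσanti : Antitone σ) (hσpos : ∀ j, 0 < σ j)
    (H₁ : Matrix (Fin p) (Fin k) ℝ) :
    Real.sqrt
        ((Matrix.diagonal σ * H₁ᵀ * (1 + H₁ * H₁ᵀ)⁻¹ * H₁ * Matrix.diagonal σ).trace)
      ≤ Real.sqrt k * specNorm (H₁ * Matrix.diagonal σ) * σ ⟨0, hk⟩ /
        Real.sqrt (σ ⟨0, hk⟩ ^ 2 + specNorm (H₁ * Matrix.diagonal σ) ^ 2) := by
  set N := specNorm (H₁ * Matrix.diagonal σ)
  set σ₁ := σ ⟨0, hk⟩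
  have hσ₁ : 0 < σ₁ := hσpos _
  have hN : 0 ≤ N := norm_nonneg _
  have htrace : (diagonal σ * H₁ᵀ * (1 + H₁ * H₁ᵀ)⁻¹ * H₁ * diagonal σ).trace
      ≤ k * (σ₁ ^ 2 * N ^ 2 / (σ₁ ^ 2 + N ^ 2)) := by
    rw [trace_diagonal_mul_transpose_mul_mul_mul_diagonal]
    refine (Finset.sum_le_sum fun j _ => (?_ : _ ≤ σ₁ ^ 2 * N ^ 2 / (σ₁ ^ 2 + N ^ 2))).trans_eq ?_
    · exact sq_mul_col_dotProduct_inv_one_add_mul_transpose_mulVec_col_le σ H₁ j (by positivity)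
        (pow_le_pow_left₀ (hσpos j).le (hσanti (Nat.zero_le j)) 2)
    · simp
  calc Real.sqrt ((diagonal σ * H₁ᵀ * (1 + H₁ * H₁ᵀ)⁻¹ * H₁ * diagonal σ).trace)
      ≤ Real.sqrt (k * (σ₁ ^ 2 * N ^ 2 / (σ₁ ^ 2 + N ^ 2))) := Real.sqrt_le_sqrt htrace
    _ = Real.sqrt k * N * σ₁ / Real.sqrt (σ₁ ^ 2 + N ^ 2) := by
      rw [Real.sqrt_mul k.cast_nonneg, Real.sqrt_div (by positivity), Real.sqrt_mul (sq_nonneg _),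
        Real.sqrt_sq hσ₁.le, Real.sqrt_sq hN]
      ring
end

section
/- For every ψ > 0, max(1/(1 + sqrt(1 + ψ²)), sqrt(1 + ψ²)·log((1 + sqrt(1 + ψ²))/ψ) − 1) ≤ log(2·sqrt(1 + ψ²)/ψ). -/
/-!
Write `s = √(1 + ψ²)`, so that `ψ² = (s - 1)(s + 1)` and `L := log ((1 + s) / ψ)` equals
`½ log ((s + 1) / (s - 1))`. Then `a log (b / a) ≤ b - a` (from `log x ≤ x - 1`) with `a = s - 1`,
`b = s + 1` gives `(s - 1) L ≤ 1`, i.e. `s L - 1 ≤ L`, and `L ≤ log (2s / ψ)` because `1 + s ≤ 2s`.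
The first term of the maximum is at most `1/2 < log 2 ≤ log (2s / ψ)`.
-/

open Matrix

open Real

lemma Real.mul_log_div_le_sub {a b : ℝ} (ha : 0 < a) (hb : 0 < b) :
    a * log (b / a) ≤ b - a :=
  calc a * log (b / a) ≤ a * (b / a - 1) :=
        mul_le_mul_of_nonneg_left (log_le_sub_one_of_pos (div_pos hb ha)) ha.le
    _ = b - a := by field_simp

section

variable {ψ s : ℝ}

lemma lt_of_sq_eq_one_add_sq (hs : 0 ≤ s) (hs2 : s ^ 2 = 1 + ψ ^ 2) : ψ < s := by nlinarith

lemma one_lt_of_sq_eq_one_add_sq (hψ : ψ ≠ 0) (hs : 0 ≤ s) (hs2 : s ^ 2 = 1 + ψ ^ 2) : 1 < s := by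
  nlinarith [sq_pos_of_ne_zero hψ]

variable (hψ : 0 < ψ) (hs : 0 ≤ s) (hs2 : s ^ 2 = 1 + ψ ^ 2)
include hψ hs hs2

lemma two_mul_log_one_add_div_eq : 2 * log ((1 + s) / ψ) = log ((1 + s) / (s - 1)) := by
  have hs1 := one_lt_of_sq_eq_one_add_sq hψ.ne' hs hs2
  have hsq : ((1 + s) / ψ) ^ 2 = (1 + s) / (s - 1) := by
    rw [div_pow, div_eq_div_iff (by positivity) (by linarith)]
    linear_combination (1 + s) * hs2
  rw [← hsq, log_pow, Nat.cast_two]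

lemma sub_one_mul_log_one_add_div_le_one : (s - 1) * log ((1 + s) / ψ) ≤ 1 := by
  have hs1 := one_lt_of_sq_eq_one_add_sq hψ.ne' hs hs2
  have h := mul_log_div_le_sub (sub_pos.2 hs1) (by linarith : 0 < 1 + s)
  rw [← two_mul_log_one_add_div_eq hψ hs hs2] at h
  linarith

lemma log_one_add_div_le_log_two_mul_div : log ((1 + s) / ψ) ≤ log (2 * s / ψ) := by
  have hs1 := one_lt_of_sq_eq_one_add_sq hψ.ne' hs hs2
  gcongr
  linarith

lemma one_div_one_add_le_log_two_mul_div : 1 / (1 + s) ≤ log (2 * s / ψ) :=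
  calc 1 / (1 + s) ≤ 1 / 2 := by
        gcongr; linarith [one_lt_of_sq_eq_one_add_sq hψ.ne' hs hs2]
    _ ≤ log 2 := by linarith [log_two_gt_d9]
    _ ≤ log (2 * s / ψ) := by
        gcongr
        rw [le_div_iff₀ hψ]
        linarith [lt_of_sq_eq_one_add_sq hs hs2]

lemma mul_log_one_add_div_sub_one_le : s * log ((1 + s) / ψ) - 1 ≤ log (2 * s / ψ) := by
  linarith [sub_one_mul_log_one_add_div_le_one hψ hs hs2,
    log_one_add_div_le_log_two_mul_div hψ hs hs2]

end

theorem stmt19 (ψ : ℝ) (hψ : 0 < ψ) :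
    max (1 / (1 + Real.sqrt (1 + ψ ^ 2)))
        (Real.sqrt (1 + ψ ^ 2) * Real.log ((1 + Real.sqrt (1 + ψ ^ 2)) / ψ) - 1)
      ≤ Real.log (2 * Real.sqrt (1 + ψ ^ 2) / ψ) := by
  have hs := Real.sqrt_nonneg (1 + ψ ^ 2)
  have hs2 : Real.sqrt (1 + ψ ^ 2) ^ 2 = 1 + ψ ^ 2 := Real.sq_sqrt (by positivity)
  exact max_le (one_div_one_add_le_log_two_mul_div hψ hs hs2)
    (mul_log_one_add_div_sub_one_le hψ hs hs2)
end
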